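/- Let d ∈ N. There exists a constant c₃ > 0 depending only on the dimension d such that for any generalized line segment ℓ : [0,1] → Z^d and any ε > 0 satisfying ε·m_ℓ > 14√d, the cylinder K_Z = {z ∈ Z^d : min_{t∈[0,1]} ‖z − ℓ(t)‖₂ ≤ ε·m_ℓ} has cardinality |K_Z| ≥ c₃·ε^{d−1}·m_ℓ^d. -/

import Mathlib

open Set

/-- Euclidean norm on `Fin n → ℝ`. -/
noncomputable def euclNorm {n : ℕ} (x : Fin n → ℝ) : ℝ := Real.sqrt (∑ i, (x i) ^ 2)

/-- Coordinatewise cast of an integer vector to a real vector. -/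
def zr {n : ℕ} (x : Fin n → ℤ) : Fin n → ℝ := fun i => (x i : ℝ)

/-- The generalized line segment `t ↦ ⌊(1-t)x + ty⌋` determined by `x, y ∈ ℝ^d`. -/
noncomputable def glSeg {d : ℕ} (x y : Fin d → ℝ) (t : ℝ) : Fin d → ℤ :=
  fun i => ⌊(1 - t) * x i + t * y i⌋

/-- `m_ℓ = ‖ℓ(1) - ℓ(0)‖₂` for the generalized line segment determined by `x, y`. -/
noncomputable def mseg {d : ℕ} (x y : Fin d → ℝ) : ℝ :=
  euclNorm (zr (glSeg x y 1) - zr (glSeg x y 0))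

/-- The discrete cylinder of radius `ρ` around the generalized line segment
determined by `x, y`. -/
def cylZ {d : ℕ} (x y : Fin d → ℝ) (ρ : ℝ) : Set (Fin d → ℤ) :=
  {z | ∃ t ∈ Icc (0 : ℝ) 1, euclNorm (zr z - zr (glSeg x y t)) ≤ ρ}

/-!
Choose a coordinate `i` in which `Δ = ℓ(1) - ℓ(0)` is largest, so that `|Δ i| ≥ m_ℓ / √d`. By the
intermediate value theorem every integer `v` between `ℓ(0) i` and `ℓ(1) i` equals `ℓ(t_v) i` for
some `t_v`. With `r = ⌊ε m_ℓ / √d⌋`, the translates of `ℓ(t_v)` by integer vectors with vanishing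
`i`-th coordinate and entries in `[-r, r]` lie in the cylinder and are pairwise distinct (their
`i`-th coordinate recovers `v`). Hence
`|K_Z| ≥ (|Δ i| + 1) (2r + 1)^(d-1) ≥ d^(-d/2) ε^(d-1) m_ℓ^d`.
-/

lemma abs_le_euclNorm {n : ℕ} (x : Fin n → ℝ) (i : Fin n) : |x i| ≤ euclNorm x := by
  rw [euclNorm, ← Real.sqrt_sq_eq_abs]
  exact Real.sqrt_le_sqrt (Finset.single_le_sum (fun j _ => sq_nonneg (x j)) (Finset.mem_univ i))

lemma euclNorm_le_sqrt_mul {n : ℕ} {x : Fin n → ℝ} {r : ℝ} (hr : 0 ≤ r) (h : ∀ i, |x i| ≤ r) :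
    euclNorm x ≤ √n * r := by
  rw [euclNorm, ← Real.sqrt_sq hr, ← Real.sqrt_mul n.cast_nonneg]
  refine Real.sqrt_le_sqrt ?_
  calc ∑ i, x i ^ 2 ≤ ∑ _i : Fin n, r ^ 2 :=
        Finset.sum_le_sum fun i _ => sq_le_sq' (abs_le.1 (h i)).1 (abs_le.1 (h i)).2
    _ = n * r ^ 2 := by simp

lemma exists_euclNorm_le_sqrt_mul_abs {n : ℕ} (hn : 0 < n) (x : Fin n → ℝ) :
    ∃ i, euclNorm x ≤ √n * |x i| := by
  obtain ⟨i, -, hi⟩ :=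
    Finset.exists_max_image Finset.univ (fun j => |x j|) ⟨⟨0, hn⟩, Finset.mem_univ _⟩
  exact ⟨i, euclNorm_le_sqrt_mul (abs_nonneg _) fun j => hi j (Finset.mem_univ j)⟩

lemma exists_floor_eq_of_mem_uIcc {c c' : ℝ} {v : ℤ} (hv : v ∈ uIcc ⌊c⌋ ⌊c'⌋) :
    ∃ t ∈ Icc (0 : ℝ) 1, ⌊(1 - t) * c + t * c'⌋ = v := by
  rw [uIcc, ← Int.floor_mono.map_min, ← Int.floor_mono.map_max] at hv
  set u := max (min c c') v
  have hu : u ∈ uIcc c c' :=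
    ⟨le_max_left _ _, max_le min_le_max ((Int.cast_le.2 hv.2).trans (Int.floor_le _))⟩
  obtain ⟨t, ht, htu⟩ := intermediate_value_uIcc
    (f := fun t : ℝ => (1 - t) * c + t * c') (a := 0) (b := 1) (by fun_prop) (by simpa using hu)
  refine ⟨t, by simpa using ht, ?_⟩
  rw [show (1 - t) * c + t * c' = u from htu, Int.floor_eq_iff]
  refine ⟨le_max_right _ _, max_lt ?_ (lt_add_one _)⟩
  exact (Int.lt_floor_add_one _).trans_le (by gcongr; exact_mod_cast hv.1)

section GeneralizedSegment

variable {d : ℕ} (x y : Fin d → ℝ)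

lemma glSeg_apply_mem_uIcc {t : ℝ} (ht : t ∈ Icc (0 : ℝ) 1) (i : Fin d) :
    glSeg x y t i ∈ uIcc (glSeg x y 0 i) (glSeg x y 1 i) := by
  have h : (1 - t) * x i + t * y i ∈ uIcc (x i) (y i) :=
    convex_uIcc (x i) (y i) left_mem_uIcc right_mem_uIcc (by linarith [ht.2]) ht.1 (by ring)
  simpa [glSeg] using Int.floor_mono.mapsTo_uIcc h

lemma exists_glSeg_apply_eq (i : Fin d) {v : ℤ}
    (hv : v ∈ uIcc (glSeg x y 0 i) (glSeg x y 1 i)) :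
    ∃ t ∈ Icc (0 : ℝ) 1, glSeg x y t i = v := by
  simpa [glSeg] using exists_floor_eq_of_mem_uIcc (by simpa [glSeg] using hv)

lemma cylZ_finite (ρ : ℝ) : (cylZ x y ρ).Finite := by
  refine (Set.finite_Icc (fun j => min (glSeg x y 0 j) (glSeg x y 1 j) - ⌈ρ⌉)
    (fun j => max (glSeg x y 0 j) (glSeg x y 1 j) + ⌈ρ⌉)).subset ?_
  rintro z ⟨t, ht, hz⟩
  have hdist : ∀ j, |z j - glSeg x y t j| ≤ ⌈ρ⌉ := fun j => by
    have := ((abs_le_euclNorm _ j).trans hz).trans (Int.le_ceil ρ)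
    simp only [zr, Pi.sub_apply] at this
    exact_mod_cast this
  refine ⟨fun j => ?_, fun j => ?_⟩ <;>
  · have hseg := glSeg_apply_mem_uIcc x y ht j
    have := abs_le.1 (hdist j)
    simp only [uIcc, mem_Icc] at hseg
    dsimp only
    omega

lemma glSeg_add_mem_cylZ {t : ℝ} (ht : t ∈ Icc (0 : ℝ) 1) {ρ : ℝ} {r : ℕ} (hr : √d * r ≤ ρ)
    {w : Fin d → ℤ} (hw : ∀ j, |w j| ≤ r) : glSeg x y t + w ∈ cylZ x y ρ := by
  refine ⟨t, ht, le_trans ?_ hr⟩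
  refine euclNorm_le_sqrt_mul r.cast_nonneg fun j => ?_
  simpa [zr] using (by exact_mod_cast hw j : |(w j : ℝ)| ≤ r)

end GeneralizedSegment

lemma card_mul_pow_le_ncard_of_add_mem {d : ℕ} {S : Set (Fin d → ℤ)} (hS : S.Finite) (i : Fin d)
    (V : Finset ℤ) (r : ℕ) (p : ℤ → Fin d → ℤ) (hp : ∀ v ∈ V, p v i = v)
    (hpS : ∀ v ∈ V, ∀ w : Fin d → ℤ, w i = 0 → (∀ j, |w j| ≤ r) → p v + w ∈ S) :
    V.card * (2 * r + 1) ^ (d - 1) ≤ S.ncard := by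
  classical
  set B : Finset (Fin d → ℤ) :=
    Fintype.piFinset fun j => if j = i then {0} else Finset.Icc (-r : ℤ) r
  have hB : B.card = (2 * r + 1) ^ (d - 1) := by
    rw [Fintype.card_piFinset]
    simp [apply_ite, Finset.prod_ite, Finset.filter_ne']
    congr 1
    omega
  have hmem : ∀ w ∈ B, w i = 0 ∧ ∀ j, |w j| ≤ r := by
    intro w hw
    simp only [B, Fintype.mem_piFinset] at hw
    refine ⟨by simpa using hw i, fun j => ?_⟩
    by_cases hj : j = i
    · subst hj; simp [show w j = 0 by simpa using hw j]
    · simpa [hj, abs_le] using hw j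
  have hinj : Set.InjOn (fun q : ℤ × (Fin d → ℤ) => p q.1 + q.2) ↑(V ×ˢ B) := by
    rintro ⟨v, w⟩ hvw ⟨v', w'⟩ hvw' h
    simp only [Finset.coe_product, mem_prod, Finset.mem_coe] at hvw hvw' h
    have hv : v = v' := by
      simpa [hp v hvw.1, hp v' hvw'.1, (hmem w hvw.2).1, (hmem w' hvw'.2).1] using congrFun h i
    subst hv
    simp_all
  calc V.card * (2 * r + 1) ^ (d - 1) = ((V ×ˢ B).image fun q => p q.1 + q.2).card := by
        rw [Finset.card_image_of_injOn hinj, Finset.card_product, hB]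
    _ ≤ S.ncard := by
        rw [← Set.ncard_coe_finset]
        refine Set.ncard_le_ncard ?_ hS
        simp only [Finset.coe_image, Finset.coe_product, image_subset_iff]
        rintro ⟨v, w⟩ ⟨hv, hw⟩
        exact hpS v hv w (hmem w hw).1 (hmem w hw).2

theorem cylinder_cardinality_lower_bound
    (d : ℕ) (hd : 0 < d) :
    ∃ c₃ : ℝ, 0 < c₃ ∧
      ∀ (x y : Fin d → ℝ) (ε : ℝ), 0 < ε →
        ε * mseg x y > 14 * Real.sqrt d →
        c₃ * ε ^ (d - 1) * mseg x y ^ d ≤ ((cylZ x y (ε * mseg x y)).ncard : ℝ) := by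
  have hs : 0 < √(d : ℝ) := Real.sqrt_pos.2 (by exact_mod_cast hd)
  refine ⟨(√d ^ d)⁻¹, by positivity, fun x y ε hε hlong => ?_⟩
  set m := mseg x y
  have hρ : 0 ≤ ε * m := (by positivity : (0 : ℝ) ≤ 14 * √d).trans hlong.le
  obtain ⟨i, hi⟩ :=
    exists_euclNorm_le_sqrt_mul_abs hd (zr (glSeg x y 1) - zr (glSeg x y 0))
  set V := Finset.uIcc (glSeg x y 0 i) (glSeg x y 1 i)
  choose! T hT using fun v (hv : v ∈ V) =>
    exists_glSeg_apply_eq x y i (by rwa [← Finset.coe_uIcc, Finset.mem_coe])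
  set r := ⌊ε * m / √d⌋₊
  have hr : √d * r ≤ ε * m := by
    rw [mul_comm, ← le_div_iff₀ hs]
    exact Nat.floor_le (by positivity)
  have hcount := card_mul_pow_le_ncard_of_add_mem (cylZ_finite x y (ε * m)) i V r
    (fun v => glSeg x y (T v)) (fun v hv => (hT v hv).2)
    fun v hv w _ hw => glSeg_add_mem_cylZ x y (hT v hv).1 hr hw
  have hV : m / √d ≤ V.card := by
    rw [div_le_iff₀' hs, Int.card_uIcc]
    refine hi.trans (mul_le_mul_of_nonneg_left ?_ hs.le)
    push_cast [zr, Pi.sub_apply, Nat.cast_natAbs]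
    linarith
  have hR : ε * m / √d ≤ 2 * r + 1 := by
    have := Nat.lt_floor_add_one (ε * m / √d)
    linarith [(Nat.cast_nonneg r : (0 : ℝ) ≤ r)]
  calc (√d ^ d)⁻¹ * ε ^ (d - 1) * m ^ d = m / √d * (ε * m / √d) ^ (d - 1) := by
        obtain ⟨e, rfl⟩ : ∃ e, d = e + 1 := ⟨d - 1, by omega⟩
        rw [Nat.add_sub_cancel, div_pow, mul_pow, pow_succ, pow_succ]
        field_simp
    _ ≤ V.card * (2 * r + 1) ^ (d - 1) := by gcongr
    _ ≤ (cylZ x y (ε * m)).ncard := by exact_mod_cast hcount
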